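/- Let A, B, C be three pairwise disjoint finite point sets in R^d with |A| ≤ |B|. Then Δ(A∪B∪C) ≤ Δ(A) + 3·Δ(B∪C) + 4·D(A,B). -/

import Mathlib

/-!
Write `S = B ∪ C`, so that `Δ(A ∪ S) = Δ(A) + Δ(S) + D(A, S)`. By the Huygens–Steiner identity
`∑_{p ∈ P} ‖p - x‖² = Δ(P) + |P| ‖μ(P) - x‖²`, measuring `A ∪ S` from `μ(S)` instead of its own
centroid gives `D(A, S) ≤ |A| ‖μ(A) - μ(S)‖²`, and `‖μ(A) - μ(S)‖² ≤ 2‖μ(A) - μ(B)‖² + 2‖μ(B) - μ(S)‖²`.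
Writing `D(A, B) = |A| ‖μ(A) - μ‖² + |B| ‖μ(B) - μ‖²` with `μ = μ(A ∪ B)` and using `|A| ≤ |B|`
gives `|A| ‖μ(A) - μ(B)‖² ≤ 2 D(A, B)`, while `B ⊆ S` gives `|B| ‖μ(B) - μ(S)‖² ≤ Δ(S)`.
-/

open Finset
open scoped Classical
open RealInnerProductSpace

noncomputable def centroid {d : ℕ} (P : Finset (EuclideanSpace ℝ (Fin d))) :
    EuclideanSpace ℝ (Fin d) :=
  (P.card : ℝ)⁻¹ • ∑ p ∈ P, p

noncomputable def Delta {d : ℕ} (P : Finset (EuclideanSpace ℝ (Fin d))) : ℝ :=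
  ∑ p ∈ P, ‖p - centroid P‖ ^ 2

noncomputable def mergeD {d : ℕ} (A B : Finset (EuclideanSpace ℝ (Fin d))) : ℝ :=
  Delta (A ∪ B) - Delta A - Delta B

lemma norm_sub_sq_le_two_mul {E : Type*} [SeminormedAddCommGroup E] (x y z : E) :
    ‖x - z‖ ^ 2 ≤ 2 * (‖x - y‖ ^ 2 + ‖y - z‖ ^ 2) :=
  (pow_le_pow_left₀ (norm_nonneg _) (norm_sub_le_norm_sub_add_norm_sub x y z) 2).trans add_sq_le

section Delta

variable {d : ℕ}

lemma Delta_nonneg (P : Finset (EuclideanSpace ℝ (Fin d))) : 0 ≤ Delta P :=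
  sum_nonneg fun _ _ ↦ sq_nonneg _

lemma card_smul_centroid (P : Finset (EuclideanSpace ℝ (Fin d))) :
    (P.card : ℝ) • centroid P = ∑ p ∈ P, p := by
  rcases P.eq_empty_or_nonempty with rfl | hP
  · simp
  · rw [_root_.centroid, smul_smul, mul_inv_cancel₀ (by exact_mod_cast hP.card_pos.ne'), one_smul]

lemma sum_sub_centroid (P : Finset (EuclideanSpace ℝ (Fin d))) :
    ∑ p ∈ P, (p - centroid P) = 0 := by
  rw [sum_sub_distrib, sum_const, ← Nat.cast_smul_eq_nsmul ℝ, card_smul_centroid, sub_self]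

lemma sum_norm_sub_sq_eq (P : Finset (EuclideanSpace ℝ (Fin d)))
    (x : EuclideanSpace ℝ (Fin d)) :
    ∑ p ∈ P, ‖p - x‖ ^ 2 = Delta P + P.card * ‖centroid P - x‖ ^ 2 := by
  have expand (p : EuclideanSpace ℝ (Fin d)) : ‖p - x‖ ^ 2 = ‖p - centroid P‖ ^ 2
      + 2 * ⟪p - centroid P, centroid P - x⟫ + ‖centroid P - x‖ ^ 2 := by
    rw [← norm_add_sq_real, sub_add_sub_cancel]
  have cross : ∑ p ∈ P, 2 * ⟪p - centroid P, centroid P - x⟫ = 0 := by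
    rw [← mul_sum, ← sum_inner, sum_sub_centroid, inner_zero_left, mul_zero]
  rw [sum_congr rfl fun p _ ↦ expand p, sum_add_distrib, sum_add_distrib, cross, sum_const,
    nsmul_eq_mul, Delta, add_zero]

lemma Delta_le_sum_norm_sub_sq (P : Finset (EuclideanSpace ℝ (Fin d)))
    (x : EuclideanSpace ℝ (Fin d)) : Delta P ≤ ∑ p ∈ P, ‖p - x‖ ^ 2 := by
  rw [sum_norm_sub_sq_eq]
  exact le_add_of_nonneg_right (by positivity)

lemma card_mul_norm_centroid_sub_sq_le_Delta {B S : Finset (EuclideanSpace ℝ (Fin d))}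
    (hBS : B ⊆ S) : B.card * ‖centroid B - centroid S‖ ^ 2 ≤ Delta S :=
  calc B.card * ‖centroid B - centroid S‖ ^ 2
      ≤ Delta B + B.card * ‖centroid B - centroid S‖ ^ 2 := le_add_of_nonneg_left (Delta_nonneg B)
    _ = ∑ p ∈ B, ‖p - centroid S‖ ^ 2 := (sum_norm_sub_sq_eq B _).symm
    _ ≤ ∑ p ∈ S, ‖p - centroid S‖ ^ 2 := sum_le_sum_of_subset_of_nonneg hBS fun _ _ _ ↦ by positivity
    _ = Delta S := rfl

lemma mergeD_le (X Y : Finset (EuclideanSpace ℝ (Fin d))) :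
    mergeD X Y ≤ X.card * ‖centroid X - centroid Y‖ ^ 2 := by
  have hunion : ∑ p ∈ X ∪ Y, ‖p - centroid Y‖ ^ 2
      ≤ ∑ p ∈ X, ‖p - centroid Y‖ ^ 2 + ∑ p ∈ Y, ‖p - centroid Y‖ ^ 2 := by
    rw [← sum_union_inter]
    exact le_add_of_nonneg_right (sum_nonneg fun _ _ ↦ by positivity)
  have := Delta_le_sum_norm_sub_sq (X ∪ Y) (centroid Y)
  rw [sum_norm_sub_sq_eq X, ← Delta] at hunion
  rw [mergeD]
  linarith

lemma mergeD_eq_of_disjoint {X Y : Finset (EuclideanSpace ℝ (Fin d))} (hXY : Disjoint X Y) :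
    mergeD X Y = X.card * ‖centroid X - centroid (X ∪ Y)‖ ^ 2
      + Y.card * ‖centroid Y - centroid (X ∪ Y)‖ ^ 2 := by
  have hsplit := sum_union hXY (f := fun p ↦ ‖p - centroid (X ∪ Y)‖ ^ 2)
  rw [← Delta, sum_norm_sub_sq_eq, sum_norm_sub_sq_eq] at hsplit
  rw [mergeD, hsplit]
  ring

lemma card_mul_norm_centroid_sub_sq_le_two_mul_mergeD {X Y : Finset (EuclideanSpace ℝ (Fin d))}
    (hXY : Disjoint X Y) (hcard : X.card ≤ Y.card) :
    X.card * ‖centroid X - centroid Y‖ ^ 2 ≤ 2 * mergeD X Y := by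
  have hcard' : (X.card : ℝ) ≤ Y.card := by exact_mod_cast hcard
  rw [mergeD_eq_of_disjoint hXY]
  calc (X.card : ℝ) * ‖centroid X - centroid Y‖ ^ 2
      ≤ X.card * (2 * (‖centroid X - centroid (X ∪ Y)‖ ^ 2
          + ‖centroid Y - centroid (X ∪ Y)‖ ^ 2)) := by
        rw [norm_sub_rev (centroid Y)]
        gcongr
        exact norm_sub_sq_le_two_mul _ _ _
    _ ≤ _ := by
        have := mul_le_mul_of_nonneg_right hcard' (sq_nonneg ‖centroid Y - centroid (X ∪ Y)‖)
        linarith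

end Delta

theorem delta_union_three_bound_general {d : ℕ} (A B C : Finset (EuclideanSpace ℝ (Fin d)))
    (hAB : Disjoint A B)
    (hcard : A.card ≤ B.card) :
    Delta (A ∪ B ∪ C) ≤ Delta A + 3 * Delta (B ∪ C) + 4 * mergeD A B := by
  set S := B ∪ C
  have hsplit : Delta (A ∪ S) = Delta A + Delta S + mergeD A S := by rw [mergeD]; ring
  have hAB' := card_mul_norm_centroid_sub_sq_le_two_mul_mergeD hAB hcard
  have hBS := card_mul_norm_centroid_sub_sq_le_Delta (subset_union_left : B ⊆ S)
  have hcard' : (A.card : ℝ) ≤ B.card := by exact_mod_cast hcard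
  have hmerge : mergeD A S ≤ 4 * mergeD A B + 2 * Delta S :=
    calc mergeD A S ≤ A.card * ‖centroid A - centroid S‖ ^ 2 := mergeD_le A S
      _ ≤ A.card * (2 * (‖centroid A - centroid B‖ ^ 2 + ‖centroid B - centroid S‖ ^ 2)) := by
        gcongr; exact norm_sub_sq_le_two_mul _ _ _
      _ ≤ 4 * mergeD A B + 2 * Delta S := by
        have := mul_le_mul_of_nonneg_right hcard' (sq_nonneg ‖centroid B - centroid S‖)
        linarith
  rw [union_assoc, hsplit]
  linarith

theorem delta_union_three_bound {d : ℕ} (A B C : Finset (EuclideanSpace ℝ (Fin d)))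
    (hAB : Disjoint A B) (hAC : Disjoint A C) (hBC : Disjoint B C)
    (hcard : A.card ≤ B.card) :
    Delta (A ∪ B ∪ C) ≤ Delta A + 3 * Delta (B ∪ C) + 4 * mergeD A B :=
  delta_union_three_bound_general A B C hAB hcard
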